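/- arXiv:1910.03249 — 7 statements merged into one kernel-verified Lean document; each statement's English description precedes it below -/
import Mathlib

section
/- For any finite list I = ⟨a_1,…,a_n⟩ of item sizes a_i ∈ (0,1] and any packing of I into m unit-capacity bins, 2·m ≥ 2·|I_XL| + |I_M| + |I_L|. In particular, OPT(I) ≥ |I_XL| + (|I_M| + |I_L|)/2. -/
/-!
Give each item the weight `[a > 1/3] + [a ≥ 2/3]`, so that extra large items weigh 2, medium and
large ones weigh 1 and small ones 0. A bin of capacity 1 holds at most two items larger than 1/3,
and only one if it holds an item of size at least 2/3, so every bin has weight at most 2.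
-/

/-- A packing of the list `I` of item sizes into `m` unit-capacity bins:
an assignment of item indices to bins such that each bin's contents sum to at most 1. -/
def IsPacking (I : List ℝ) (m : ℕ) (f : Fin I.length → Fin m) : Prop :=
  ∀ b : Fin m, ∑ i ∈ Finset.univ.filter (fun i => f i = b), I.get i ≤ 1

/-- `OPT I` is the minimum number of unit-capacity bins needed to pack `I`. -/
noncomputable def OPT (I : List ℝ) : ℕ :=
  sInf {m | ∃ f : Fin I.length → Fin m, IsPacking I m f}

open Finset

theorem List.countP_eq_card_filter_get {α : Type*} (l : List α) (p : α → Bool) :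
    l.countP p = #{i : Fin l.length | p (l.get i)} := by
  induction l with
  | nil => simp
  | cons a l ih =>
    have h := Fin.card_filter_univ_succ' (fun i : Fin (l.length + 1) => p ((a :: l).get i))
    simp only [List.get_cons_zero] at h
    rw [List.countP_cons, ih, add_comm]
    exact h.symm

theorem List.two_mul_countP_XL_add_countP_M_add_countP_L (l : List ℝ) :
    2 * l.countP (fun a => decide (2/3 ≤ a))
      + l.countP (fun a => decide (1/3 < a ∧ a ≤ 1/2))
      + l.countP (fun a => decide (1/2 < a ∧ a < 2/3))
      = l.countP (fun a => decide (1/3 < a)) + l.countP (fun a => decide (2/3 ≤ a)) := by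
  induction l with
  | nil => simp
  | cons a l ih =>
    simp only [List.countP_cons, decide_eq_true_eq]
    split_ifs <;> first | omega | (exfalso; grind)

section Bin

variable {ι : Type*} {s : Finset ι} {a : ι → ℝ}

theorem Finset.add_le_sum_of_ne (ha : ∀ k ∈ s, 0 ≤ a k) {i j : ι} (hi : i ∈ s) (hj : j ∈ s)
    (hij : i ≠ j) : a i + a j ≤ ∑ k ∈ s, a k := by
  classical
  rw [← sum_pair hij]
  exact sum_le_sum_of_subset_of_nonneg (insert_subset hi (singleton_subset_iff.2 hj))
    fun k hk _ => ha k hk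

theorem card_filter_third_lt_le_two (ha : ∀ i ∈ s, 0 ≤ a i) (hs : ∑ i ∈ s, a i ≤ 1) :
    #{i ∈ s | 1/3 < a i} ≤ 2 := by
  rcases (s.filter fun i => 1/3 < a i).eq_empty_or_nonempty with hT | hT
  · rw [hT]; simp
  have hlt : ∑ i ∈ s with 1/3 < a i, (1/3 : ℝ) < ∑ i ∈ s with 1/3 < a i, a i :=
    sum_lt_sum_of_nonempty hT fun i hi => (mem_filter.1 hi).2
  have hle : ∑ i ∈ s with 1/3 < a i, a i ≤ ∑ i ∈ s, a i :=
    sum_le_sum_of_subset_of_nonneg (filter_subset _ _) fun i hi _ => ha i hi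
  rw [sum_const, nsmul_eq_mul] at hlt
  have : (#{i ∈ s | 1/3 < a i} : ℝ) < 3 := by linarith
  have : #{i ∈ s | 1/3 < a i} < 3 := by exact_mod_cast this
  omega

theorem card_filter_third_lt_le_one (ha : ∀ i ∈ s, 0 ≤ a i) (hs : ∑ i ∈ s, a i ≤ 1)
    {j : ι} (hj : j ∈ s) (haj : 2/3 ≤ a j) : #{i ∈ s | 1/3 < a i} ≤ 1 := by
  by_contra! h
  obtain ⟨i, hi, hij⟩ := exists_mem_ne h j
  rw [mem_filter] at hi
  linarith [add_le_sum_of_ne ha hi.1 hj hij, hi.2]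

theorem card_filter_third_lt_add_card_filter_two_thirds_le_le_two (ha : ∀ i ∈ s, 0 ≤ a i)
    (hs : ∑ i ∈ s, a i ≤ 1) : #{i ∈ s | 1/3 < a i} + #{i ∈ s | 2/3 ≤ a i} ≤ 2 := by
  rcases (s.filter fun i => 2/3 ≤ a i).eq_empty_or_nonempty with hX | ⟨j, hj⟩
  · simpa [hX] using card_filter_third_lt_le_two ha hs
  rw [mem_filter] at hj
  have hXT : #{i ∈ s | 2/3 ≤ a i} ≤ #{i ∈ s | 1/3 < a i} :=
    card_le_card <| monotone_filter_right s fun i _ hi => by linarith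
  linarith [card_filter_third_lt_le_one ha hs hj.1 hj.2]

end Bin

theorem card_filter_third_lt_add_card_filter_two_thirds_le_le_two_mul_card
    {ι β : Type*} [Fintype ι] [Fintype β] [DecidableEq β] {a : ι → ℝ} (ha : ∀ i, 0 ≤ a i)
    (f : ι → β) (hf : ∀ b, ∑ i ∈ univ.filter (fun i => f i = b), a i ≤ 1) :
    #{i | 1/3 < a i} + #{i | 2/3 ≤ a i} ≤ 2 * Fintype.card β := by
  rw [card_eq_sum_card_fiberwise (f := f) fun i _ => mem_univ (f i),
    card_eq_sum_card_fiberwise (s := {i | 2/3 ≤ a i}) (f := f) fun i _ => mem_univ (f i),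
    ← sum_add_distrib]
  refine (sum_le_sum (g := fun _ => 2) fun b _ => ?_).trans_eq (by simp [mul_comm])
  rw [filter_comm, filter_comm (p := fun i => 2/3 ≤ a i)]
  exact card_filter_third_lt_add_card_filter_two_thirds_le_le_two (fun i _ => ha i) (hf b)

theorem IsPacking.two_mul_countP_XL_add_countP_M_add_countP_L_le {I : List ℝ}
    (hI : ∀ a ∈ I, 0 ≤ a) {m : ℕ} {f : Fin I.length → Fin m} (hf : IsPacking I m f) :
    2 * I.countP (fun a => decide (2/3 ≤ a))
      + I.countP (fun a => decide (1/3 < a ∧ a ≤ 1/2))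
      + I.countP (fun a => decide (1/2 < a ∧ a < 2/3)) ≤ 2 * m := by
  rw [List.two_mul_countP_XL_add_countP_M_add_countP_L, List.countP_eq_card_filter_get,
    List.countP_eq_card_filter_get]
  simpa using card_filter_third_lt_add_card_filter_two_thirds_le_le_two_mul_card
    (fun i => hI _ (List.get_mem I i)) f hf

theorem IsPacking.exists_isPacking_OPT {I : List ℝ} {m : ℕ} {f : Fin I.length → Fin m}
    (hf : IsPacking I m f) : ∃ g, IsPacking I (OPT I) g :=
  Nat.sInf_mem (s := {m | ∃ f : Fin I.length → Fin m, IsPacking I m f}) ⟨m, f, hf⟩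

/-- For any packing of `I` into `m` unit-capacity bins, `2·m ≥ 2·|I_XL| + |I_M| + |I_L|`;
in particular `OPT(I) ≥ |I_XL| + (|I_M| + |I_L|)/2`. -/
theorem opt_ge_XL_add_half_M_add_L (I : List ℝ) (hI : ∀ a ∈ I, 0 < a ∧ a ≤ 1)
    (m : ℕ) (f : Fin I.length → Fin m) (hf : IsPacking I m f) :
    2 * I.countP (fun a => decide (2/3 ≤ a))
      + I.countP (fun a => decide (1/3 < a ∧ a ≤ 1/2))
      + I.countP (fun a => decide (1/2 < a ∧ a < 2/3)) ≤ 2 * m ∧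
    (I.countP (fun a => decide (2/3 ≤ a)) : ℝ)
      + ((I.countP (fun a => decide (1/3 < a ∧ a ≤ 1/2))
          + I.countP (fun a => decide (1/2 < a ∧ a < 2/3)) : ℕ) : ℝ) / 2
      ≤ (OPT I : ℝ) := by
  have hI₀ : ∀ a ∈ I, 0 ≤ a := fun a ha => (hI a ha).1.le
  obtain ⟨g, hg⟩ := hf.exists_isPacking_OPT
  refine ⟨hf.two_mul_countP_XL_add_countP_M_add_countP_L_le hI₀, ?_⟩
  have hOPT := hg.two_mul_countP_XL_add_countP_M_add_countP_L_le hI₀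
  rify at hOPT
  push_cast at hOPT ⊢
  linarith
end

section
/- Fix r_L ∈ [0,1]. The function r* ↦ B(r_L, r*) is monotonically increasing on the interval [r_L, 1]: for all x, y with r_L ≤ x ≤ y ≤ 1, B(r_L, x) ≤ B(r_L, y). -/
/-- The PH3 bound function `B(r_L, r*)`:
`B(r_L, r*) = 3/2 + min{1/(4r*), 3/(6r*+2)}·(r* − r_L)` if `r* ≥ r_L`, and
`B(r_L, r*) = 3/2 + min{3/(4r*), 9/(6r*+2)}·(r_L − r*)` if `r* < r_L`, where the minima are
written out piecewise: the first equals `3/(6r*+2)` for `r* ≤ 1/3` and `1/(4r*)` for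
`r* ≥ 1/3`, the second equals `9/(6r*+2)` for `r* ≤ 1/3` and `3/(4r*)` for `r* ≥ 1/3`
(in particular, for `r* = 0` both minima are taken as the second expression). -/
noncomputable def Bfun (rL rs : ℝ) : ℝ :=
  if rL ≤ rs then
    3/2 + (if rs ≤ 1/3 then 3/(6*rs + 2) else 1/(4*rs)) * (rs - rL)
  else
    3/2 + (if rs ≤ 1/3 then 9/(6*rs + 2) else 3/(4*rs)) * (rL - rs)

/-- For fixed `r_L ∈ [0,1]`, the PH3 bound `r* ↦ B(r_L, r*)` is monotonically increasing
on `[r_L, 1]`. -/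
theorem Bfun_mono_incr (rL : ℝ) (hrL : rL ∈ Set.Icc (0 : ℝ) 1)
    (x y : ℝ) (hx : rL ≤ x) (hxy : x ≤ y) (hy : y ≤ 1) :
    Bfun rL x ≤ Bfun rL y := by
  obtain ⟨h0, h1⟩ := hrL
  have hy' : rL ≤ y := hx.trans hxy
  have hx0 : 0 ≤ x := h0.trans hx
  have hy0 : 0 ≤ y := h0.trans hy'
  unfold Bfun
  rw [if_pos hx, if_pos hy']
  rcases le_or_gt x (1/3) with hx3 | hx3
  · rcases le_or_gt y (1/3) with hy3 | hy3
    · rw [if_pos hx3, if_pos hy3]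
      have hdx : (0:ℝ) < 6*x + 2 := by linarith
      have hdy : (0:ℝ) < 6*y + 2 := by linarith
      have : 3/(6*x + 2) * (x - rL) ≤ 3/(6*y + 2) * (y - rL) := by
        rw [div_mul_eq_mul_div, div_mul_eq_mul_div, div_le_div_iff₀ hdx hdy]
        nlinarith [mul_nonneg h0 (sub_nonneg.2 hxy)]
      linarith
    · rw [if_pos hx3, if_neg (not_le.2 hy3)]
      have hdx : (0:ℝ) < 6*x + 2 := by linarith
      have hdy : (0:ℝ) < 4*y := by linarith
      have : 3/(6*x + 2) * (x - rL) ≤ 1/(4*y) * (y - rL) := by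
        rw [div_mul_eq_mul_div, div_mul_eq_mul_div, div_le_div_iff₀ hdx hdy]
        nlinarith [mul_nonneg h0 (by linarith : (0:ℝ) ≤ 6*y - 3*x - 1),
          mul_nonneg (by linarith : (0:ℝ) ≤ 1 - 3*x) hy0]
      linarith
  · have hy3 : ¬ (y ≤ 1/3) := by intro h; linarith
    rw [if_neg (not_le.2 hx3), if_neg hy3]
    have hdx : (0:ℝ) < 4*x := by linarith
    have hdy : (0:ℝ) < 4*y := by linarith
    have : 1/(4*x) * (x - rL) ≤ 1/(4*y) * (y - rL) := by
      rw [div_mul_eq_mul_div, div_mul_eq_mul_div, div_le_div_iff₀ hdx hdy]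
      nlinarith [mul_nonneg h0 (sub_nonneg.2 hxy)]
    linarith
end

section
/- Fix r_L ∈ [0,1]. The function r* ↦ B(r_L, r*) is monotonically decreasing on the interval [0, r_L]: for all x, y with 0 ≤ x ≤ y ≤ r_L, B(r_L, x) ≥ B(r_L, y). -/
/-- For fixed `r_L ∈ [0,1]`, the PH3 bound `r* ↦ B(r_L, r*)` is monotonically decreasing
on `[0, r_L]`. -/
theorem Bfun_mono_decr (rL : ℝ) (hrL : rL ∈ Set.Icc (0 : ℝ) 1)
    (x y : ℝ) (hx : 0 ≤ x) (hxy : x ≤ y) (hy : y ≤ rL) :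
    Bfun rL y ≤ Bfun rL x := by
  have key : ∀ rs : ℝ, rs ≤ rL →
      Bfun rL rs = 3/2 + (if rs ≤ 1/3 then 9/(6*rs + 2) else 3/(4*rs)) * (rL - rs) := by
    intro rs hrs
    rcases eq_or_lt_of_le hrs with h | h
    · subst h
      simp [Bfun]
    · simp [Bfun, not_le.mpr h]
  rw [key x (hxy.trans hy), key y hy]
  have hy0 : 0 ≤ y := hx.trans hxy
  have g : ∀ r : ℝ, 0 ≤ r → (if r ≤ 1/3 then 9/(6*r + 2) else 3/(4*r)) * (rL - r)
      = if r ≤ 1/3 then 9*(rL - r)/(6*r + 2) else 3*(rL - r)/(4*r) := by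
    intro r hr
    split <;> ring
  rw [g x hx, g y hy0]
  gcongr 3/2 + ?_
  -- main inequality on the second summand
  by_cases hx3 : x ≤ 1/3 <;> by_cases hy3 : y ≤ 1/3
  · simp only [if_pos hx3, if_pos hy3]
    rw [div_le_div_iff₀ (by linarith) (by linarith)]
    nlinarith
  · -- x ≤ 1/3 < y: go through 1/3
    simp only [if_pos hx3, if_neg hy3]
    push_neg at hy3
    have h1 : 3*(rL - y)/(4*y) ≤ 9*(rL - (1/3))/(6*(1/3) + 2) := by
      rw [div_le_div_iff₀ (by linarith) (by norm_num)]
      nlinarith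
    have h2 : 9*(rL - (1/3))/(6*(1/3) + 2) ≤ 9*(rL - x)/(6*x + 2) := by
      rw [div_le_div_iff₀ (by norm_num) (by linarith)]
      nlinarith
    linarith
  · exact absurd (hxy.trans hy3) hx3
  · simp only [if_neg hx3, if_neg hy3]
    push_neg at hx3
    rw [div_le_div_iff₀ (by linarith) (by linarith)]
    nlinarith
end

section
/- For all r_L, r* ∈ [0,1], B(r_L, r*) ≤ max(7/4 − r_L/4, 3/2 + (9/2)·r_L). -/
/-- For all `r_L, r* ∈ [0,1]`, `B(r_L, r*) ≤ max(7/4 − r_L/4, 3/2 + (9/2)·r_L)`. -/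
theorem Bfun_le_max (rL : ℝ) (hrL : rL ∈ Set.Icc (0 : ℝ) 1)
    (rs : ℝ) (hrs : rs ∈ Set.Icc (0 : ℝ) 1) :
    Bfun rL rs ≤ max (7/4 - rL/4) (3/2 + 9/2 * rL) := by
  obtain ⟨h0, h1⟩ := hrL
  obtain ⟨s0, s1⟩ := hrs
  unfold Bfun
  split_ifs with hle hth hth
  · refine le_trans ?_ (le_max_left _ _)
    have hd : (0:ℝ) < 6*rs + 2 := by linarith
    have key : 3/(6*rs + 2) * (rs - rL) ≤ 1/4 - rL/4 := by
      rw [div_mul_eq_mul_div, div_le_iff₀ hd]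
      nlinarith [mul_nonneg h0 (by linarith : (0:ℝ) ≤ 1/3 - rs)]
    linarith
  · refine le_trans ?_ (le_max_left _ _)
    have hd : (0:ℝ) < 4*rs := by linarith
    have key : 1/(4*rs) * (rs - rL) ≤ 1/4 - rL/4 := by
      rw [div_mul_eq_mul_div, div_le_iff₀ hd]
      nlinarith [mul_nonneg h0 (by linarith : (0:ℝ) ≤ 1 - rs)]
    linarith
  · refine le_trans ?_ (le_max_right _ _)
    have hd : (0:ℝ) < 6*rs + 2 := by linarith
    have key : 9/(6*rs + 2) * (rL - rs) ≤ 9/2 * rL := by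
      rw [div_mul_eq_mul_div, div_le_iff₀ hd]
      nlinarith [mul_nonneg h0 s0]
    linarith
  · refine le_trans ?_ (le_max_right _ _)
    have hd : (0:ℝ) < 4*rs := by linarith
    have key : 3/(4*rs) * (rL - rs) ≤ 9/2 * rL := by
      rw [div_mul_eq_mul_div, div_le_iff₀ hd]
      nlinarith [mul_nonneg h0 s0]
    linarith
end

section
/- For every r_L ∈ [0,1], max(7/4 − r_L/4, 3/2 + (9/2)·r_L) ≥ 33/19, with equality if and only if r_L = 1/19. Consequently, for all r* ∈ [0,1], B(1/19, r*) ≤ 33/19. -/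
/-- The optimal choice of `r_L` for a single copy of PH3: for every `r_L ∈ [0,1]`,
`max(7/4 − r_L/4, 3/2 + (9/2)·r_L) ≥ 33/19`, with equality iff `r_L = 1/19`;
consequently `B(1/19, r*) ≤ 33/19` for all `r* ∈ [0,1]`. -/
theorem Bfun_opt_single :
    (∀ rL ∈ Set.Icc (0 : ℝ) 1,
      33/19 ≤ max (7/4 - rL/4) (3/2 + 9/2 * rL) ∧
      (max (7/4 - rL/4) (3/2 + 9/2 * rL) = 33/19 ↔ rL = 1/19)) ∧
    ∀ rs ∈ Set.Icc (0 : ℝ) 1, Bfun (1/19) rs ≤ 33/19 := by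
  constructor
  · intro rL hrL
    refine ⟨?_, ?_, ?_⟩
    · rcases le_or_gt rL (1/19) with h | h
      · exact le_max_of_le_left (by linarith)
      · exact le_max_of_le_right (by linarith)
    · intro h
      have h1 : 7/4 - rL/4 ≤ 33/19 := h ▸ le_max_left _ _
      have h2 : 3/2 + 9/2*rL ≤ 33/19 := h ▸ le_max_right _ _
      linarith
    · rintro rfl
      norm_num
  · intro rs hrs
    obtain ⟨h0, h1⟩ := hrs
    unfold Bfun
    split_ifs with hle h13 h13
    · have hd : (0:ℝ) < 6*rs + 2 := by linarith
      have : 3/(6*rs + 2) * (rs - 1/19) ≤ 9/38 := by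
        rw [div_mul_eq_mul_div, div_le_iff₀ hd]; nlinarith
      linarith
    · have hd : (0:ℝ) < 4*rs := by linarith
      have : 1/(4*rs) * (rs - 1/19) ≤ 9/38 := by
        rw [div_mul_eq_mul_div, div_le_iff₀ hd]; nlinarith
      linarith
    · have hd : (0:ℝ) < 6*rs + 2 := by linarith
      have : 9/(6*rs + 2) * (1/19 - rs) ≤ 9/38 := by
        rw [div_mul_eq_mul_div, div_le_iff₀ hd]; nlinarith
      linarith
    · exact absurd (by linarith : rs ≤ 1/3) h13
end

section
/- Let R ∈ (3/2, 33/19) and r_min ∈ [0,1]. Define r_L := r_min + (R − 3/2)·(2 + 6·r_min)/9 if r_min ≤ 1/3, and r_L := r_min + (R − 3/2)·(4·r_min)/3 if r_min > 1/3, and assume r_L ≤ 1. Then B(r_L, r_min) = R, and for every r* with r_min ≤ r* ≤ min(1, max((3·r_L + 2·R − 3)/(12 − 6·R), r_L/(7 − 4·R))), it holds that B(r_L, r*) ≤ R. -/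
set_option maxHeartbeats 1600000 in
/-- The interval-covering step in the construction of k-copy PH3: given a target ratio
`R ∈ (3/2, 33/19)` and a left endpoint `r_min ∈ [0,1]`, the parameter `r_L` computed from
`r_min` satisfies `B(r_L, r_min) = R`, and `B(r_L, r*) ≤ R` holds for every `r*` between
`r_min` and `min(1, max((3r_L + 2R − 3)/(12 − 6R), r_L/(7 − 4R)))`. -/
theorem Bfun_interval_cover (R rmin : ℝ)
    (hR : R ∈ Set.Ioo (3/2 : ℝ) (33/19))
    (hrmin : rmin ∈ Set.Icc (0 : ℝ) 1)
    (rL : ℝ)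
    (hrL : rL = if rmin ≤ 1/3 then rmin + (R - 3/2) * (2 + 6 * rmin) / 9
                else rmin + (R - 3/2) * (4 * rmin) / 3)
    (hrL1 : rL ≤ 1) :
    Bfun rL rmin = R ∧
    ∀ rs : ℝ, rmin ≤ rs →
      rs ≤ min 1 (max ((3 * rL + 2 * R - 3) / (12 - 6 * R)) (rL / (7 - 4 * R))) →
      Bfun rL rs ≤ R := by
  obtain ⟨hR1, hR2⟩ := hR
  obtain ⟨hm0, hm1⟩ := hrmin
  constructor
  · have hgt : rmin < rL := by
      rw [hrL]; split_ifs with h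
      · nlinarith
      · nlinarith
    unfold Bfun
    rw [if_neg (by linarith)]
    by_cases h : rmin ≤ 1/3
    · rw [if_pos h, hrL, if_pos h]
      have hd : (6*rmin+2) ≠ 0 := by linarith
      field_simp
      ring
    · rw [if_neg h, hrL, if_neg h]
      have hd : (0:ℝ) < rmin := by linarith
      have hd' : rmin ≠ 0 := ne_of_gt hd
      field_simp
      ring
  · intro rs hlo hhi
    have hrs0 : (0:ℝ) ≤ rs := le_trans hm0 hlo
    have hmax : rs ≤ max ((3*rL+2*R-3)/(12-6*R)) (rL/(7-4*R)) :=
      le_trans hhi (min_le_right _ _)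
    have h126 : (0:ℝ) < 12 - 6*R := by linarith
    have h74 : (0:ℝ) < 7 - 4*R := by linarith
    unfold Bfun
    split_ifs with h1 h2 h2
    · -- rL ≤ rs, rs ≤ 1/3
      have hd : (0:ℝ) < 6*rs+2 := by linarith
      have key : 3*(rs-rL) ≤ (R-3/2)*(6*rs+2) := by
        rcases le_max_iff.mp hmax with hA | hB
        · have := (le_div_iff₀ h126).mp hA
          nlinarith
        · have := (le_div_iff₀ h74).mp hB
          nlinarith [mul_nonneg (by linarith : (0:ℝ) ≤ R-3/2)
            (by linarith : (0:ℝ) ≤ 2-6*rs)]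
      have hle : 3/(6*rs+2)*(rs-rL) ≤ R - 3/2 := by
        rw [div_mul_eq_mul_div, div_le_iff₀ hd]; linarith [key]
      linarith
    · -- rL ≤ rs, rs > 1/3
      have hd : (0:ℝ) < 4*rs := by linarith
      have key : (rs-rL) ≤ (R-3/2)*(4*rs) := by
        rcases le_max_iff.mp hmax with hA | hB
        · have := (le_div_iff₀ h126).mp hA
          nlinarith [mul_nonneg (by linarith : (0:ℝ) ≤ R-3/2)
            (by linarith : (0:ℝ) ≤ 6*rs-2)]
        · have := (le_div_iff₀ h74).mp hB
          nlinarith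
      have hle : 1/(4*rs)*(rs-rL) ≤ R - 3/2 := by
        rw [div_mul_eq_mul_div, div_le_iff₀ hd]; linarith [key]
      linarith
    · -- rs < rL, rs ≤ 1/3
      have hm : rmin ≤ 1/3 := le_trans hlo h2
      rw [if_pos hm] at hrL
      have hd : (0:ℝ) < 6*rs+2 := by linarith
      have hEq : 9*rL = 9*rmin + (R-3/2)*(2+6*rmin) := by rw [hrL]; ring
      have key : 9*(rL-rs) ≤ (R-3/2)*(6*rs+2) := by
        nlinarith [hEq, mul_nonneg (by linarith : (0:ℝ) ≤ R-3/2)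
          (by linarith : (0:ℝ) ≤ rs-rmin)]
      have hle : 9/(6*rs+2)*(rL-rs) ≤ R - 3/2 := by
        rw [div_mul_eq_mul_div, div_le_iff₀ hd]; linarith [key]
      linarith
    · -- rs < rL, rs > 1/3
      have hd : (0:ℝ) < 4*rs := by linarith
      have key : 3*(rL-rs) ≤ (R-3/2)*(4*rs) := by
        by_cases hm : rmin ≤ 1/3
        · rw [if_pos hm] at hrL
          have hEq : 9*rL = 9*rmin + (R-3/2)*(2+6*rmin) := by rw [hrL]; ring
          nlinarith [hEq, mul_nonneg (by linarith : (0:ℝ) ≤ R-3/2)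
            (by linarith : (0:ℝ) ≤ rs-rmin),
            mul_nonneg (by linarith : (0:ℝ) ≤ R-3/2)
            (by linarith : (0:ℝ) ≤ 3*rs-1)]
        · rw [if_neg hm] at hrL
          have hEq : 3*rL = 3*rmin + (R-3/2)*(4*rmin) := by rw [hrL]; ring
          nlinarith [hEq, mul_nonneg (by linarith : (0:ℝ) ≤ R-3/2)
            (by linarith : (0:ℝ) ≤ rs-rmin)]
      have hle : 3/(4*rs)*(rL-rs) ≤ R - 3/2 := by
        rw [div_mul_eq_mul_div, div_le_iff₀ hd]; linarith [key]
      linarith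
end

section
/- There exist reals r_1, …, r_6 ∈ [0,1] such that for every r* ∈ [0,1], min_{1 ≤ i ≤ 6} B(r_i, r*) ≤ 1.5714. -/
open Set

theorem exists_fin_mem_Icc_succ {X : Type*} [LinearOrder X] (a : ℕ → X) {n : ℕ} (hn : 0 < n)
    {x : X} (hx : x ∈ Icc (a 0) (a n)) : ∃ i : Fin n, x ∈ Icc (a i) (a (i + 1)) := by
  induction n, hn using Nat.le_induction with
  | base => exact ⟨0, hx⟩
  | succ n _ ih =>
    by_cases h : x ≤ a n
    · obtain ⟨i, hi⟩ := ih ⟨hx.1, h⟩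
      exact ⟨i.castSucc, hi⟩
    · exact ⟨Fin.last n, le_of_not_ge h, hx.2⟩

/-- `min{1/(4r*), 3/(6r*+2)}`, the slope of the right branch of `B`; the left branch has slope
`3 * ph3Slope`. -/
noncomputable def ph3Slope (rs : ℝ) : ℝ := if rs ≤ 1/3 then 3/(6*rs + 2) else 1/(4*rs)

theorem Bfun_of_le {rL rs : ℝ} (h : rL ≤ rs) : Bfun rL rs = 3/2 + ph3Slope rs * (rs - rL) := by
  simp only [Bfun, ph3Slope, if_pos h]

theorem Bfun_of_ge {rL rs : ℝ} (h : rs ≤ rL) :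
    Bfun rL rs = 3/2 + 3 * ph3Slope rs * (rL - rs) := by
  rcases h.eq_or_lt with rfl | hlt
  · simp [Bfun]
  · simp only [Bfun, ph3Slope, if_neg hlt.not_ge]
    split_ifs <;> ring

theorem ph3Slope_nonneg {rs : ℝ} (h : 0 ≤ rs) : 0 ≤ ph3Slope rs := by
  unfold ph3Slope
  split_ifs <;> positivity

theorem ph3Slope_antitoneOn : AntitoneOn ph3Slope (Ici 0) := by
  intro x (hx : 0 ≤ x) y (hy : 0 ≤ y) hxy
  unfold ph3Slope
  split_ifs with hy' hx' hx'
  · gcongr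
  · linarith
  · rw [div_le_div_iff₀ (by linarith) (by positivity)]
    nlinarith
  · gcongr
    linarith

theorem Bfun_antitoneOn (rL : ℝ) : AntitoneOn (Bfun rL) (Icc 0 rL) := by
  intro x hx y hy hxy
  rw [Bfun_of_ge hx.2, Bfun_of_ge hy.2]
  have hslope := ph3Slope_antitoneOn hx.1 hy.1 hxy
  have hslope_nonneg := ph3Slope_nonneg hx.1
  gcongr ?_ + 3 * ?_ * ?_ <;> linarith [hy.2]

theorem ph3Slope_mul_sub_monotoneOn {rL : ℝ} (hrL : 0 ≤ rL) :
    MonotoneOn (fun rs => ph3Slope rs * (rs - rL)) (Ici rL) := by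
  intro x (hx : rL ≤ x) y (hy : rL ≤ y) hxy
  simp only [ph3Slope]
  -- the two formulas agree at `rs = 1/3`, which is what makes the mixed case work
  split_ifs with hx' hy' hy'
  · rw [div_mul_eq_mul_div, div_mul_eq_mul_div, div_le_div_iff₀ (by linarith) (by linarith)]
    nlinarith
  · rw [div_mul_eq_mul_div, div_mul_eq_mul_div, div_le_div_iff₀ (by linarith) (by linarith)]
    nlinarith
  · linarith
  · rw [div_mul_eq_mul_div, div_mul_eq_mul_div, div_le_div_iff₀ (by linarith) (by linarith)]
    nlinarith

theorem Bfun_monotoneOn {rL : ℝ} (hrL : 0 ≤ rL) : MonotoneOn (Bfun rL) (Ici rL) := by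
  intro x hx y hy hxy
  rw [Bfun_of_le hx, Bfun_of_le hy]
  linarith [ph3Slope_mul_sub_monotoneOn hrL hx hy hxy]

theorem Bfun_le_of_mem_Icc {rL a b c rs : ℝ} (ha : 0 ≤ a) (haL : a ≤ rL) (hLb : rL ≤ b)
    (hac : Bfun rL a ≤ c) (hbc : Bfun rL b ≤ c) (hrs : rs ∈ Icc a b) : Bfun rL rs ≤ c := by
  rcases le_total rs rL with h | h
  · exact (Bfun_antitoneOn rL ⟨ha, haL⟩ ⟨ha.trans hrs.1, h⟩ hrs.1).trans hac
  · exact (Bfun_monotoneOn (ha.trans haL) h hLb hrs.2).trans hbc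

/-- The copy with parameter `r i` (below) takes care of `[breakpoint i, breakpoint (i + 1)]`. -/
noncomputable def breakpoint : ℕ → ℝ
  | 0 => 0
  | 1 => 7403/100000
  | 2 => 16451/100000
  | 3 => 6877/25000
  | 4 => 21279/50000
  | 5 => 32621/50000
  | _ => 1

/-- There exist parameters r_1, …, r_6 ∈ [0,1] such that for every r* ∈ [0,1] the best of
the corresponding 6 parallel copies of PH3 has bound at most 1.5714. -/
theorem kcopy_PH3_bound :
    ∃ r : Fin 6 → ℝ, (∀ i, r i ∈ Set.Icc (0 : ℝ) 1) ∧
      ∀ rs ∈ Set.Icc (0 : ℝ) 1, ∃ i, Bfun (r i) rs ≤ 1.5714 := by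
  refine ⟨![793/50000, 4671/50000, 941/5000, 7601/25000, 46609/100000, 71453/100000],
    fun i => ?_, fun rs hrs => ?_⟩
  · fin_cases i <;> norm_num
  · obtain ⟨i, hi⟩ := exists_fin_mem_Icc_succ breakpoint (n := 6) (by norm_num) hrs
    refine ⟨i, Bfun_le_of_mem_Icc ?_ ?_ ?_ ?_ ?_ hi⟩ <;>
      fin_cases i <;> norm_num [breakpoint, Bfun]
end
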